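/- Let n ≥ 5 and let f ∈ C_0^∞(ℝⁿ\{0}) be complex-valued. Then the weighted Hardy inequality holds: (∫_{ℝⁿ} |f(x)|²/‖x‖⁴ dx)^{1/2} ≤ (2/(n−4)) · (∫_{ℝⁿ} |∇f(x)|²/‖x‖² dx)^{1/2}. -/

import Mathlib

open MeasureTheory Real Set Metric Filter

lemma norm_sq_complex (z : ℂ) : ‖z‖ ^ 2 = z.re ^ 2 + z.im ^ 2 := by
  rw [Complex.sq_norm, Complex.normSq_apply]; ring

lemma re_ip_le (a b : ℂ) : |a.re * b.re + a.im * b.im| ≤ ‖a‖ * ‖b‖ := by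
  have h := Complex.abs_re_le_norm (a * (starRingEnd ℂ) b)
  simpa [Complex.mul_re, norm_mul, Complex.norm_conj, sub_neg_eq_add] using h

lemma hardy1D (g : ℝ → ℂ) (hg : ContDiff ℝ (⊤ : ℕ∞) g) (hgs : HasCompactSupport g) (k : ℕ) :
    ∫ r in Ioi (0:ℝ), r ^ k * ‖g r‖ ^ 2 ≤
      (2 / ((k:ℝ) + 1)) ^ 2 * ∫ r in Ioi (0:ℝ), r ^ (k+2) * ‖deriv g r‖ ^ 2 := by
  have hgcont : Continuous g := hg.continuous
  have hg'cont : Continuous (deriv g) := hg.continuous_deriv (by simp)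
  set N : ℝ → ℝ := fun r => ‖g r‖ ^ 2 with hN
  set D : ℝ → ℝ := fun r =>
    2 * ((g r).re * (deriv g r).re + (g r).im * (deriv g r).im) with hD
  have hNval : ∀ r, N r = (g r).re ^ 2 + (g r).im ^ 2 := fun r => norm_sq_complex _
  have hNderiv : ∀ r, HasDerivAt N (D r) r := by
    intro r
    have hgd : HasDerivAt g (deriv g r) r := (hg.differentiable (by simp) r).hasDerivAt
    have hre : HasDerivAt (fun r => (g r).re) ((deriv g r).re) r :=
      (Complex.reCLM.hasFDerivAt.comp_hasDerivAt r hgd)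
    have him : HasDerivAt (fun r => (g r).im) ((deriv g r).im) r :=
      (Complex.imCLM.hasFDerivAt.comp_hasDerivAt r hgd)
    have := ((hre.mul hre).add (him.mul him))
    have h2 : HasDerivAt N ((deriv g r).re * (g r).re + (g r).re * (deriv g r).re
        + ((deriv g r).im * (g r).im + (g r).im * (deriv g r).im)) r := by
      refine HasDerivAt.congr_of_eventuallyEq this (Eventually.of_forall ?_)
      intro x; rw [hNval x]; simp only [Pi.add_apply, Pi.pow_apply, Pi.mul_apply]; ring
    convert h2 using 1; rw [hD]; ring
  have hNcont : Continuous N := (hgcont.norm.pow 2)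
  have hDcont : Continuous D := by
    apply Continuous.mul continuous_const
    exact ((Complex.continuous_re.comp hgcont).mul
        (Complex.continuous_re.comp hg'cont)).add
      ((Complex.continuous_im.comp hgcont).mul (Complex.continuous_im.comp hg'cont))
  have hNsupp : HasCompactSupport N :=
    hgs.comp_left (g := fun z : ℂ => ‖z‖ ^ 2) (by simp)
  set φ : ℝ → ℝ := fun r => r ^ (k+1) * N r with hφ
  have hφderiv : ∀ r, HasDerivAt φ
      (((k:ℝ)+1) * r ^ k * N r + r ^ (k+1) * D r) r := by
    intro r
    have := (hasDerivAt_pow (k+1) r).mul (hNderiv r)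
    simpa [Nat.add_sub_cancel, hφ, Pi.mul_def] using this
  have hNsmooth : ContDiff ℝ (⊤ : ℕ∞) N := by
    have hNe : N = fun r => (Complex.reCLM (g r)) ^ 2 + (Complex.imCLM (g r)) ^ 2 :=
      funext fun r => by simpa using hNval r
    rw [hNe]
    exact ((Complex.reCLM.contDiff.comp hg).pow 2).add ((Complex.imCLM.contDiff.comp hg).pow 2)
  have hφc1 : ContDiff ℝ 1 φ :=
    ((contDiff_id.pow (k+1)).mul hNsmooth).of_le (by simp)
  have hφsupp : HasCompactSupport φ := by
    apply hNsupp.mono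
    intro r hr hzero
    exact hr (by simp [hφ, hzero])
  have hIBP : ∫ r in Ioi (0:ℝ), deriv φ r = -φ 0 :=
    HasCompactSupport.integral_Ioi_deriv_eq hφc1 hφsupp 0
  have hφ0 : φ 0 = 0 := by simp [hφ]
  have hderiv_eq : deriv φ = fun r => ((k:ℝ)+1) * r ^ k * N r + r ^ (k+1) * D r :=
    funext fun r => (hφderiv r).deriv
  rw [hderiv_eq, hφ0, neg_zero] at hIBP
  -- integrability
  have hsupp1 : HasCompactSupport (fun r : ℝ => ((k:ℝ)+1) * r ^ k * N r) := by
    apply hNsupp.mono; intro r hr hzero; exact hr (by simp [hzero])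
  have hsupp2 : HasCompactSupport (fun r : ℝ => r ^ (k+1) * D r) := by
    apply hgs.mono
    intro r hr
    simp only [Function.mem_support, ne_eq] at hr ⊢
    intro hg0
    exact hr (by simp [hD, hg0])
  have hint1 : Integrable (fun r : ℝ => ((k:ℝ)+1) * r ^ k * N r) :=
    (Continuous.mul (continuous_const.mul (continuous_pow k)) hNcont).integrable_of_hasCompactSupport hsupp1
  have hint2 : Integrable (fun r : ℝ => r ^ (k+1) * D r) :=
    ((continuous_pow (k+1)).mul hDcont).integrable_of_hasCompactSupport hsupp2
  rw [integral_add hint1.integrableOn hint2.integrableOn] at hIBP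
  have hIeq : ∫ r in Ioi (0:ℝ), ((k:ℝ)+1) * r ^ k * N r
      = ((k:ℝ)+1) * ∫ r in Ioi (0:ℝ), r ^ k * N r := by
    simp_rw [mul_assoc]
    exact integral_const_mul _ _
  rw [hIeq] at hIBP
  set I := ∫ r in Ioi (0:ℝ), r ^ k * N r with hI
  set J := ∫ r in Ioi (0:ℝ), r ^ (k+2) * ‖deriv g r‖ ^ 2 with hJ
  set u : ℝ → ℝ := fun r => Real.sqrt (r ^ k) * ‖g r‖ with hu
  set v : ℝ → ℝ := fun r => Real.sqrt (r ^ (k+2)) * ‖deriv g r‖ with hv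
  have huv : ∀ r ∈ Ioi (0:ℝ), u r * v r = r ^ (k+1) * (‖g r‖ * ‖deriv g r‖) := by
    intro r hr
    have hr0 : (0:ℝ) ≤ r := (le_of_lt hr)
    have : Real.sqrt (r ^ k) * Real.sqrt (r ^ (k+2)) = r ^ (k+1) := by
      rw [← Real.sqrt_mul (pow_nonneg hr0 k)]
      have : r ^ k * r ^ (k+2) = (r ^ (k+1)) ^ 2 := by ring
      rw [this, Real.sqrt_sq (pow_nonneg hr0 _)]
    calc u r * v r = Real.sqrt (r ^ k) * Real.sqrt (r ^ (k+2)) * (‖g r‖ * ‖deriv g r‖) := by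
          rw [hu, hv]; ring
      _ = r ^ (k+1) * (‖g r‖ * ‖deriv g r‖) := by rw [this]
  have hucont : Continuous u := ((continuous_pow k).sqrt).mul hgcont.norm
  have hvcont : Continuous v := ((continuous_pow (k+2)).sqrt).mul hg'cont.norm
  have husupp : HasCompactSupport u := by
    apply hgs.mono
    intro r hr; simp only [Function.mem_support, ne_eq] at hr ⊢
    intro hg0; exact hr (by simp [hu, hg0])
  have hvsupp : HasCompactSupport v := by
    apply (hgs.deriv).mono
    intro r hr; simp only [Function.mem_support, ne_eq] at hr ⊢
    intro hg0; exact hr (by simp [hv, hg0])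
  have huvint : Integrable (fun r : ℝ => 2 * (u r * v r)) := by
    apply Continuous.integrable_of_hasCompactSupport
    · exact continuous_const.mul (hucont.mul hvcont)
    · apply husupp.mono
      intro r hr; simp only [Function.mem_support, ne_eq] at hr ⊢
      intro hu0; exact hr (by simp [hu0])
  have hstep1 : ((k:ℝ)+1) * I ≤ ∫ r in Ioi (0:ℝ), 2 * (u r * v r) := by
    have : ((k:ℝ)+1) * I = ∫ r in Ioi (0:ℝ), -(r ^ (k+1) * D r) := by
      rw [integral_neg]; linarith
    rw [this]
    apply setIntegral_mono_on hint2.neg.integrableOn huvint.integrableOn measurableSet_Ioi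
    intro r hr
    have hr0 : (0:ℝ) < r := hr
    have hDb : |D r| ≤ 2 * (‖g r‖ * ‖deriv g r‖) := by
      have := re_ip_le (g r) (deriv g r)
      calc |D r| = 2 * |(g r).re * (deriv g r).re + (g r).im * (deriv g r).im| := by
            rw [hD]; rw [abs_mul]; simp
        _ ≤ 2 * (‖g r‖ * ‖deriv g r‖) := by linarith
    calc -(r ^ (k+1) * D r) ≤ |r ^ (k+1) * D r| := neg_le_abs _
      _ = r ^ (k+1) * |D r| := by
          rw [abs_mul, abs_of_nonneg (pow_nonneg hr0.le _)]
      _ ≤ r ^ (k+1) * (2 * (‖g r‖ * ‖deriv g r‖)) := by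
          apply mul_le_mul_of_nonneg_left hDb (pow_nonneg hr0.le _)
      _ = 2 * (u r * v r) := by rw [huv r hr]; ring
  have hpq : Real.HolderConjugate 2 2 := by
    exact Real.HolderConjugate.two_two
  have humem : MemLp u (ENNReal.ofReal 2) (volume.restrict (Ioi (0:ℝ))) :=
    (hucont.memLp_of_hasCompactSupport husupp).restrict _
  have hvmem : MemLp v (ENNReal.ofReal 2) (volume.restrict (Ioi (0:ℝ))) :=
    (hvcont.memLp_of_hasCompactSupport hvsupp).restrict _
  have hCS := integral_mul_le_Lp_mul_Lq_of_nonneg hpq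
    (Eventually.of_forall fun r => mul_nonneg (Real.sqrt_nonneg _) (norm_nonneg _))
    (Eventually.of_forall fun r => mul_nonneg (Real.sqrt_nonneg _) (norm_nonneg _))
    humem hvmem
  have hu2 : ∫ r in Ioi (0:ℝ), u r ^ (2:ℝ) = I := by
    rw [hI]
    apply setIntegral_congr_fun measurableSet_Ioi
    intro r hr
    have hr0 : (0:ℝ) ≤ r := le_of_lt hr
    show u r ^ (2:ℝ) = r ^ k * N r
    rw [show ((2:ℝ)) = ((2:ℕ):ℝ) by norm_num, Real.rpow_natCast, hu, hN]
    simp only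
    rw [mul_pow, Real.sq_sqrt (pow_nonneg hr0 _)]
  have hv2 : ∫ r in Ioi (0:ℝ), v r ^ (2:ℝ) = J := by
    rw [hJ]
    apply setIntegral_congr_fun measurableSet_Ioi
    intro r hr
    have hr0 : (0:ℝ) ≤ r := le_of_lt hr
    show v r ^ (2:ℝ) = r ^ (k+2) * ‖deriv g r‖ ^ 2
    rw [show ((2:ℝ)) = ((2:ℕ):ℝ) by norm_num, Real.rpow_natCast, hv]
    simp only
    rw [mul_pow, Real.sq_sqrt (pow_nonneg hr0 _)]
  rw [hu2, hv2] at hCS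
  have hsqrtI : I ^ ((1:ℝ)/2) = Real.sqrt I := (Real.sqrt_eq_rpow I).symm
  have hsqrtJ : J ^ ((1:ℝ)/2) = Real.sqrt J := (Real.sqrt_eq_rpow J).symm
  rw [hsqrtI, hsqrtJ] at hCS
  have hstep2 : ((k:ℝ)+1) * I ≤ 2 * (Real.sqrt I * Real.sqrt J) := by
    calc ((k:ℝ)+1) * I ≤ ∫ r in Ioi (0:ℝ), 2 * (u r * v r) := hstep1
      _ = 2 * ∫ r in Ioi (0:ℝ), u r * v r := integral_const_mul _ _
      _ ≤ 2 * (Real.sqrt I * Real.sqrt J) := by linarith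
  -- conclude
  have hInn : 0 ≤ I := by
    apply setIntegral_nonneg measurableSet_Ioi
    intro r hr
    exact mul_nonneg (pow_nonneg (le_of_lt hr) _) (sq_nonneg _)
  have hJnn : 0 ≤ J := by
    apply setIntegral_nonneg measurableSet_Ioi
    intro r hr
    exact mul_nonneg (pow_nonneg (le_of_lt hr) _) (sq_nonneg _)
  have hk1 : (0:ℝ) < (k:ℝ)+1 := by positivity
  rcases eq_or_lt_of_le hInn with h0 | hpos
  · rw [hI] at h0 ⊢
    rw [← h0]
    positivity
  · have hsI : 0 < Real.sqrt I := Real.sqrt_pos.mpr hpos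
    have h3 : ((k:ℝ)+1) * Real.sqrt I ≤ 2 * Real.sqrt J := by
      have hII := Real.mul_self_sqrt hInn
      nlinarith [hstep2, hsI, Real.sqrt_nonneg J]
    have h4 : Real.sqrt I ≤ (2/((k:ℝ)+1)) * Real.sqrt J := by
      rw [div_mul_eq_mul_div, le_div_iff₀ hk1]
      nlinarith
    have h5 : I ≤ ((2/((k:ℝ)+1)) * Real.sqrt J) ^ 2 := by
      have := pow_le_pow_left₀ (Real.sqrt_nonneg I) h4 2
      rwa [Real.sq_sqrt hInn] at this
    calc I ≤ ((2/((k:ℝ)+1)) * Real.sqrt J) ^ 2 := h5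
      _ = (2/((k:ℝ)+1)) ^ 2 * J := by rw [mul_pow, Real.sq_sqrt hJnn]

lemma polar_lintegral {n : ℕ} (hn : 0 < n) (h : EuclideanSpace ℝ (Fin n) → ENNReal)
    (hmeas : Measurable h) :
    ∫⁻ x, h x = ∫⁻ ω : Metric.sphere (0 : EuclideanSpace ℝ (Fin n)) 1,
      ∫⁻ r in Ioi (0:ℝ), ENNReal.ofReal (r ^ (n-1)) * h (r • (ω : EuclideanSpace ℝ (Fin n)))
      ∂(volume : Measure ℝ)
      ∂((volume : Measure (EuclideanSpace ℝ (Fin n))).toSphere) := by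
  haveI : Nonempty (Fin n) := Fin.pos_iff_nonempty.mp hn
  have hdim0 : Module.finrank ℝ (EuclideanSpace ℝ (Fin n)) = n := finrank_euclideanSpace_fin
  haveI : Nontrivial (EuclideanSpace ℝ (Fin n)) :=
    Module.nontrivial_of_finrank_pos (R := ℝ) (M := EuclideanSpace ℝ (Fin n)) (by rw [hdim0]; exact hn)
  have hdim : Module.finrank ℝ (EuclideanSpace ℝ (Fin n)) = n := finrank_euclideanSpace_fin
  have hmp := MeasureTheory.Measure.measurePreserving_homeomorphUnitSphereProd
    (volume : Measure (EuclideanSpace ℝ (Fin n)))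
  have hmeas2 : Measurable fun p : Metric.sphere (0:EuclideanSpace ℝ (Fin n)) 1 × Ioi (0:ℝ) =>
      h ((homeomorphUnitSphereProd (EuclideanSpace ℝ (Fin n))).symm p) := by
    exact hmeas.comp (continuous_subtype_val.comp
      (homeomorphUnitSphereProd (EuclideanSpace ℝ (Fin n))).symm.continuous).measurable
  calc ∫⁻ x, h x ∂(volume : Measure (EuclideanSpace ℝ (Fin n)))
      = ∫⁻ x in {(0:EuclideanSpace ℝ (Fin n))}ᶜ, h x := by
        rw [MeasureTheory.restrict_compl_singleton]
    _ = ∫⁻ x : ({(0:EuclideanSpace ℝ (Fin n))}ᶜ : Set (EuclideanSpace ℝ (Fin n))), h ↑x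
          ∂((volume : Measure (EuclideanSpace ℝ (Fin n))).comap (↑)) :=
        (lintegral_subtype_comap (measurableSet_singleton _).compl _).symm
    _ = ∫⁻ p : Metric.sphere (0:EuclideanSpace ℝ (Fin n)) 1 × Ioi (0:ℝ),
          h ((homeomorphUnitSphereProd (EuclideanSpace ℝ (Fin n))).symm p)
          ∂(((volume : Measure (EuclideanSpace ℝ (Fin n))).toSphere).prod
            (Measure.volumeIoiPow (Module.finrank ℝ (EuclideanSpace ℝ (Fin n)) - 1))) := by
        rw [← hmp.lintegral_comp hmeas2]
        congr 1
        ext x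
        rw [Homeomorph.symm_apply_apply]
    _ = ∫⁻ ω : Metric.sphere (0:EuclideanSpace ℝ (Fin n)) 1, ∫⁻ r : Ioi (0:ℝ),
          h ((r : ℝ) • (ω : EuclideanSpace ℝ (Fin n)))
          ∂(Measure.volumeIoiPow (Module.finrank ℝ (EuclideanSpace ℝ (Fin n)) - 1))
          ∂((volume : Measure (EuclideanSpace ℝ (Fin n))).toSphere) := by
        rw [lintegral_prod _ hmeas2.aemeasurable]
        simp only [homeomorphUnitSphereProd_symm_apply_coe]
    _ = _ := by
        congr 1
        ext ω
        rw [hdim, Measure.volumeIoiPow]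
        rw [lintegral_withDensity_eq_lintegral_mul _
          ((measurable_subtype_coe.pow_const _).ennreal_ofReal)
          (show Measurable fun r : Ioi (0:ℝ) => h ((r:ℝ) • (ω : EuclideanSpace ℝ (Fin n))) from
            hmeas.comp (measurable_subtype_coe.smul_const _))]
        simp only [Pi.mul_apply]
        exact lintegral_subtype_comap measurableSet_Ioi
          (fun t => ENNReal.ofReal (t ^ (n-1)) * h (t • (ω : EuclideanSpace ℝ (Fin n))))


theorem stmt16 {n : ℕ} (hn : 5 ≤ n) (f : EuclideanSpace ℝ (Fin n) → ℂ)
    (hf : ContDiff ℝ (⊤ : ℕ∞) f) (hsupp : HasCompactSupport f)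
    (h0 : (0 : EuclideanSpace ℝ (Fin n)) ∉ tsupport f) :
    Real.sqrt (∫ x : EuclideanSpace ℝ (Fin n), ‖f x‖ ^ 2 / ‖x‖ ^ 4)
      ≤ (2 / ((n : ℝ) - 4)) *
        Real.sqrt (∫ x : EuclideanSpace ℝ (Fin n), ‖fderiv ℝ f x‖ ^ 2 / ‖x‖ ^ 2) := by
  obtain ⟨k, rfl⟩ : ∃ k, n = k + 5 := ⟨n - 5, by omega⟩
  set F : EuclideanSpace ℝ (Fin (k+5)) → ℝ := fun x => ‖f x‖ ^ 2 / ‖x‖ ^ 4 with hF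
  set G : EuclideanSpace ℝ (Fin (k+5)) → ℝ := fun x => ‖fderiv ℝ f x‖ ^ 2 / ‖x‖ ^ 2 with hG
  set c : ℝ := 2 / ((k:ℝ) + 1) with hc
  have hcast : ((k+5:ℕ):ℝ) - 4 = (k:ℝ) + 1 := by push_cast; ring
  have hcpos : 0 < c := by rw [hc]; positivity
  -- f vanishes near 0
  obtain ⟨ε, hε, hball⟩ : ∃ ε > 0, ball (0:EuclideanSpace ℝ (Fin (k+5))) ε ⊆ (tsupport f)ᶜ :=
    Metric.mem_nhds_iff.mp ((isClosed_tsupport f).isOpen_compl.mem_nhds h0)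
  have hfz : ∀ x ∈ ball (0:EuclideanSpace ℝ (Fin (k+5))) ε, f x = 0 :=
    fun x hx => image_eq_zero_of_notMem_tsupport (hball hx)
  have hfdz : ∀ x ∈ ball (0:EuclideanSpace ℝ (Fin (k+5))) ε, fderiv ℝ f x = 0 := by
    intro x hx
    by_contra hne
    exact hball hx (support_fderiv_subset ℝ (Function.mem_support.mpr hne))
  have hdf_cont : Continuous (fderiv ℝ f) := hf.continuous_fderiv (by simp)
  -- continuity of F and G
  have hquot_cont : ∀ (m : ℕ) (u : EuclideanSpace ℝ (Fin (k+5)) → ℝ), Continuous u →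
      (∀ x ∈ ball (0:EuclideanSpace ℝ (Fin (k+5))) ε, u x = 0) →
      Continuous fun x : EuclideanSpace ℝ (Fin (k+5)) => u x / ‖x‖ ^ m := by
    intro m u hu hu0
    rw [continuous_iff_continuousAt]
    intro x
    rcases eq_or_ne x 0 with rfl | hx
    · have heq : (fun x : EuclideanSpace ℝ (Fin (k+5)) => u x / ‖x‖ ^ m)
          =ᶠ[nhds (0:EuclideanSpace ℝ (Fin (k+5)))] (fun _ => 0) := by
        filter_upwards [ball_mem_nhds (0:EuclideanSpace ℝ (Fin (k+5))) hε] with y hy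
        simp [hu0 y hy]
      exact ContinuousAt.congr continuousAt_const heq.symm
    · exact (hu.continuousAt).div ((continuous_norm.pow m).continuousAt)
        (pow_ne_zero m (norm_ne_zero_iff.mpr hx))
  have hFcont : Continuous F :=
    hquot_cont 4 _ (hf.continuous.norm.pow 2) (fun x hx => by simp [hfz x hx])
  have hGcont : Continuous G :=
    hquot_cont 2 _ (hdf_cont.norm.pow 2) (fun x hx => by simp [hfdz x hx])
  have hFsupp : HasCompactSupport F := by
    apply hsupp.mono
    intro x hx
    simp only [Function.mem_support, ne_eq] at hx ⊢
    intro h0'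
    exact hx (by simp [hF, h0'])
  have hGsupp : HasCompactSupport G := by
    apply HasCompactSupport.mono' hsupp
    intro x hx
    simp only [Function.mem_support, ne_eq] at hx
    have hne : fderiv ℝ f x ≠ 0 := by
      intro h0'
      exact hx (by simp [hG, h0'])
    exact support_fderiv_subset ℝ (Function.mem_support.mpr hne)
  have hFint : Integrable F := hFcont.integrable_of_hasCompactSupport hFsupp
  have hGint : Integrable G := hGcont.integrable_of_hasCompactSupport hGsupp
  have hFnn : ∀ x, 0 ≤ F x := fun x => div_nonneg (sq_nonneg _) (by positivity)
  have hGnn : ∀ x, 0 ≤ G x := fun x => div_nonneg (sq_nonneg _) (by positivity)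
  -- support radius
  obtain ⟨R, hR⟩ : ∃ R, tsupport f ⊆ closedBall (0:EuclideanSpace ℝ (Fin (k+5))) R :=
    (hsupp : IsCompact (tsupport f)).isBounded.subset_closedBall 0
  -- per-ray estimate
  have key : ∀ ω : Metric.sphere (0:EuclideanSpace ℝ (Fin (k+5))) 1,
      (∫⁻ r in Ioi (0:ℝ), ENNReal.ofReal (r ^ (k+5-1)) *
          ENNReal.ofReal (F (r • (ω : EuclideanSpace ℝ (Fin (k+5))))))
        ≤ ENNReal.ofReal (c^2) * ∫⁻ r in Ioi (0:ℝ), ENNReal.ofReal (r ^ (k+5-1)) *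
          ENNReal.ofReal (G (r • (ω : EuclideanSpace ℝ (Fin (k+5))))) := by
    intro ω
    set w : EuclideanSpace ℝ (Fin (k+5)) := (ω : EuclideanSpace ℝ (Fin (k+5))) with hwdef
    have hw : ‖w‖ = 1 := mem_sphere_zero_iff_norm.mp ω.2
    set g : ℝ → ℂ := fun r => f (r • w) with hg
    have hgc : ContDiff ℝ (⊤ : ℕ∞) g := hf.comp (contDiff_id.smul contDiff_const)
    have houts : ∀ r : ℝ, r ∉ Icc (-R) R → (r • w) ∉ tsupport f := by
      intro r hr hmem
      apply hr
      have := hR hmem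
      rw [mem_closedBall_zero_iff, norm_smul, hw, mul_one, Real.norm_eq_abs] at this
      exact abs_le.mp this
    have hgs : HasCompactSupport g := by
      apply HasCompactSupport.intro (isCompact_Icc (a := -R) (b := R))
      intro r hr
      exact image_eq_zero_of_notMem_tsupport (f := f) (houts r hr)
    have hnorm : ∀ r ∈ Ioi (0:ℝ), ‖r • w‖ = r := by
      intro r hr
      rw [norm_smul, hw, mul_one, Real.norm_eq_abs, abs_of_pos hr]
    have hderiv : ∀ r : ℝ, deriv g r = fderiv ℝ f (r • w) w := by
      intro r
      have h1 : HasDerivAt (fun s : ℝ => s • w) ((1:ℝ) • w) r :=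
        (hasDerivAt_id r).smul_const w
      have h2 := ((hf.differentiable (by simp) (r • w)).hasFDerivAt).comp_hasDerivAt r h1
      have := h2.deriv
      rw [show g = f ∘ fun s => s • w from rfl]
      simpa using this
    have hd_le : ∀ r : ℝ, ‖deriv g r‖ ≤ ‖fderiv ℝ f (r • w)‖ := by
      intro r
      rw [hderiv r]
      calc ‖fderiv ℝ f (r • w) w‖ ≤ ‖fderiv ℝ f (r • w)‖ * ‖w‖ :=
            ContinuousLinearMap.le_opNorm _ _
        _ = ‖fderiv ℝ f (r • w)‖ := by rw [hw, mul_one]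
    have i1 : Integrable (fun r : ℝ => r ^ k * ‖g r‖ ^ 2) := by
      apply Continuous.integrable_of_hasCompactSupport
      · exact (continuous_pow k).mul (hgc.continuous.norm.pow 2)
      · apply hgs.mono
        intro r hr
        simp only [Function.mem_support, ne_eq] at hr ⊢
        intro h'; exact hr (by simp [h'])
    have i2 : Integrable (fun r : ℝ => r ^ (k+2) * ‖deriv g r‖ ^ 2) := by
      apply Continuous.integrable_of_hasCompactSupport
      · exact (continuous_pow (k+2)).mul ((hgc.continuous_deriv (by simp)).norm.pow 2)
      · apply hgs.deriv.mono
        intro r hr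
        simp only [Function.mem_support, ne_eq] at hr ⊢
        intro h'; exact hr (by simp [h'])
    have i3 : Integrable (fun r : ℝ => r ^ (k+2) * ‖fderiv ℝ f (r • w)‖ ^ 2) := by
      apply Continuous.integrable_of_hasCompactSupport
      · exact (continuous_pow (k+2)).mul
          (((hdf_cont.comp (continuous_id.smul continuous_const)).norm).pow 2)
      · apply HasCompactSupport.intro (isCompact_Icc (a := -R) (b := R))
        intro r hr
        have : fderiv ℝ f (r • w) = 0 := by
          by_contra hne
          exact houts r hr (support_fderiv_subset ℝ (Function.mem_support.mpr hne))
        simp [this]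
    have e1 : (∫⁻ r in Ioi (0:ℝ), ENNReal.ofReal (r ^ (k+5-1)) * ENNReal.ofReal (F (r • w)))
        = ∫⁻ r in Ioi (0:ℝ), ENNReal.ofReal (r ^ k * ‖g r‖ ^ 2) := by
      apply setLIntegral_congr_fun measurableSet_Ioi
      intro r hr
      beta_reduce
      have hr0 : (0:ℝ) < r := hr
      rw [← ENNReal.ofReal_mul (pow_nonneg hr0.le _)]
      congr 1
      show r ^ (k+5-1) * (‖f (r • w)‖ ^ 2 / ‖r • w‖ ^ 4) = r ^ k * ‖f (r • w)‖ ^ 2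
      rw [hnorm r hr]
      have hrne : r ≠ 0 := ne_of_gt hr0
      rw [show k+5-1 = k+4 by omega]
      field_simp
      ring
    have e3 : (∫⁻ r in Ioi (0:ℝ), ENNReal.ofReal (r ^ (k+5-1)) * ENNReal.ofReal (G (r • w)))
        = ∫⁻ r in Ioi (0:ℝ), ENNReal.ofReal (r ^ (k+2) * ‖fderiv ℝ f (r • w)‖ ^ 2) := by
      apply setLIntegral_congr_fun measurableSet_Ioi
      intro r hr
      beta_reduce
      have hr0 : (0:ℝ) < r := hr
      rw [← ENNReal.ofReal_mul (pow_nonneg hr0.le _)]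
      congr 1
      show r ^ (k+5-1) * (‖fderiv ℝ f (r • w)‖ ^ 2 / ‖r • w‖ ^ 2)
        = r ^ (k+2) * ‖fderiv ℝ f (r • w)‖ ^ 2
      rw [hnorm r hr]
      have hrne : r ≠ 0 := ne_of_gt hr0
      rw [show k+5-1 = k+4 by omega]
      field_simp
      ring
    rw [e1, e3]
    have nn1 : 0 ≤ᵐ[volume.restrict (Ioi (0:ℝ))] fun r : ℝ => r ^ k * ‖g r‖ ^ 2 := by
      rw [EventuallyLE, ae_restrict_iff' measurableSet_Ioi]
      apply Eventually.of_forall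
      intro r hr
      exact mul_nonneg (pow_nonneg (le_of_lt hr) _) (sq_nonneg _)
    have nn3 : 0 ≤ᵐ[volume.restrict (Ioi (0:ℝ))] fun r : ℝ => r ^ (k+2) * ‖fderiv ℝ f (r • w)‖ ^ 2 := by
      rw [EventuallyLE, ae_restrict_iff' measurableSet_Ioi]
      apply Eventually.of_forall
      intro r hr
      exact mul_nonneg (pow_nonneg (le_of_lt hr) _) (sq_nonneg _)
    calc ∫⁻ r in Ioi (0:ℝ), ENNReal.ofReal (r ^ k * ‖g r‖ ^ 2)
        = ENNReal.ofReal (∫ r in Ioi (0:ℝ), r ^ k * ‖g r‖ ^ 2) :=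
          (ofReal_integral_eq_lintegral_ofReal i1.integrableOn nn1).symm
      _ ≤ ENNReal.ofReal (c ^ 2 * ∫ r in Ioi (0:ℝ), r ^ (k+2) * ‖deriv g r‖ ^ 2) :=
          ENNReal.ofReal_le_ofReal (hardy1D g hgc hgs k)
      _ ≤ ENNReal.ofReal (c ^ 2 * ∫ r in Ioi (0:ℝ), r ^ (k+2) * ‖fderiv ℝ f (r • w)‖ ^ 2) := by
          apply ENNReal.ofReal_le_ofReal
          apply mul_le_mul_of_nonneg_left _ (sq_nonneg c)
          apply setIntegral_mono_on i2.integrableOn i3.integrableOn measurableSet_Ioi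
          intro r hr
          apply mul_le_mul_of_nonneg_left _ (pow_nonneg (le_of_lt hr) _)
          exact pow_le_pow_left₀ (norm_nonneg _) (hd_le r) 2
      _ = ENNReal.ofReal (c ^ 2) * ENNReal.ofReal (∫ r in Ioi (0:ℝ),
            r ^ (k+2) * ‖fderiv ℝ f (r • w)‖ ^ 2) := ENNReal.ofReal_mul (sq_nonneg c)
      _ = ENNReal.ofReal (c ^ 2) * ∫⁻ r in Ioi (0:ℝ),
            ENNReal.ofReal (r ^ (k+2) * ‖fderiv ℝ f (r • w)‖ ^ 2) := by
          rw [ofReal_integral_eq_lintegral_ofReal i3.integrableOn nn3]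
  -- global estimate
  have hFmeas : Measurable fun x => ENNReal.ofReal (F x) := hFcont.measurable.ennreal_ofReal
  have hGmeas : Measurable fun x => ENNReal.ofReal (G x) := hGcont.measurable.ennreal_ofReal
  have hpolF := polar_lintegral (n := k+5) (by omega) _ hFmeas
  have hpolG := polar_lintegral (n := k+5) (by omega) _ hGmeas
  have hmain : ∫⁻ x, ENNReal.ofReal (F x) ≤ ENNReal.ofReal (c^2) * ∫⁻ x, ENNReal.ofReal (G x) := by
    rw [hpolF, hpolG, ← lintegral_const_mul' _ _ ENNReal.ofReal_ne_top]
    apply lintegral_mono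
    intro ω
    exact key ω
  have hA := ofReal_integral_eq_lintegral_ofReal hFint (Eventually.of_forall hFnn)
  have hB := ofReal_integral_eq_lintegral_ofReal hGint (Eventually.of_forall hGnn)
  have hABo : ENNReal.ofReal (∫ x, F x) ≤ ENNReal.ofReal (c^2 * ∫ x, G x) := by
    rw [hA, ENNReal.ofReal_mul (sq_nonneg c), hB]
    exact hmain
  have hAB : ∫ x, F x ≤ c^2 * ∫ x, G x :=
    (ENNReal.ofReal_le_ofReal_iff
      (mul_nonneg (sq_nonneg c) (integral_nonneg hGnn))).mp hABo
  have hsq := Real.sqrt_le_sqrt hAB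
  rw [Real.sqrt_mul (sq_nonneg c) _, Real.sqrt_sq hcpos.le] at hsq
  rw [hcast]
  exact hsq
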